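/- In a stationary 3-cone for the equal-weight fractional perimeter in ℝ² (i.e., H_s(x, Cᵢ) = H_s(x, Cⱼ) for all x ∈ ∂Cᵢ ∩ ∂Cⱼ, x ≠ 0), every opening angle satisfies αᵢ < π. -/

import Mathlib

open MeasureTheory Set Filter Topology Real

/-- Principal-value fractional curvature in the plane. -/
noncomputable def fracCurvPV (s : ℝ) (E : Set (EuclideanSpace ℝ (Fin 2)))
    (x : EuclideanSpace ℝ (Fin 2)) (h : ℝ) : Prop :=
  Tendsto (fun ε : ℝ => ∫ y in {y | ε ≤ dist x y},
      (Set.indicator Eᶜ (fun _ => (1 : ℝ)) y - Set.indicator E (fun _ => (1 : ℝ)) y)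
        * dist x y ^ (-(2 + s)))
    (𝓝[>] (0 : ℝ)) (𝓝 h)

/-- The closed sector of angles between `a` and `b` with vertex `0`. -/
def Sec (a b : ℝ) : Set (EuclideanSpace ℝ (Fin 2)) :=
  {p | ∃ r θ : ℝ, 0 ≤ r ∧ a ≤ θ ∧ θ ≤ b ∧ p 0 = r * Real.cos θ ∧ p 1 = r * Real.sin θ}

/-- Two sectors of a 3-cone are "stationary along their common boundary" for the
equal-weight fractional perimeter if the fractional curvatures exist and agree at every
common boundary point other than the vertex. -/
def StationaryPair (s : ℝ) (C C' : Set (EuclideanSpace ℝ (Fin 2))) : Prop :=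
  ∀ x ∈ frontier C ∩ frontier C', x ≠ 0 →
    ∃ h : ℝ, fracCurvPV s C x h ∧ fracCurvPV s C' x h

namespace AuxCone

noncomputable section

abbrev E2 : Type := EuclideanSpace ℝ (Fin 2)

def pt2 (a b : ℝ) : E2 := (WithLp.equiv 2 (Fin 2 → ℝ)).symm ![a, b]

@[simp] lemma pt2_zero (a b : ℝ) : pt2 a b 0 = a := by
  simp [pt2, WithLp.equiv_symm_apply]

@[simp] lemma pt2_one (a b : ℝ) : pt2 a b 1 = b := by
  simp [pt2, WithLp.equiv_symm_apply]

lemma eq_pt2 (y : E2) : y = pt2 (y 0) (y 1) := by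
  ext i
  fin_cases i <;> simp

lemma dist2 (x y : E2) : dist x y = Real.sqrt ((x 0 - y 0) ^ 2 + (x 1 - y 1) ^ 2) := by
  rw [EuclideanSpace.dist_eq]
  simp [Fin.sum_univ_two, Real.dist_eq, sq_abs]

lemma pt2_ne_zero (a b : ℝ) (h : a ^ 2 + b ^ 2 = 1) : pt2 a b ≠ 0 := by
  intro hz
  have h0 : a = 0 := by
    have := congrArg (fun z : E2 => z 0) hz
    simpa using this
  have h1 : b = 0 := by
    have := congrArg (fun z : E2 => z 1) hz
    simpa using this
  rw [h0, h1] at h; norm_num at h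

lemma continuous_pt2 {α : Type*} [TopologicalSpace α] {f g : α → ℝ}
    (hf : Continuous f) (hg : Continuous g) : Continuous fun q => pt2 (f q) (g q) := by
  unfold pt2
  refine (PiLp.continuous_toLp 2 (fun _ : Fin 2 => ℝ)).comp ?_
  refine continuous_pi fun i => ?_
  fin_cases i <;> simpa

lemma measurableSet_Sec (a b : ℝ) : MeasurableSet (Sec a b) := by
  have hco : Continuous fun q : ℝ × ℝ => pt2 (q.1 * Real.cos q.2) (q.1 * Real.sin q.2) :=
    continuous_pt2 (continuous_fst.mul (Real.continuous_cos.comp continuous_snd))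
      (continuous_fst.mul (Real.continuous_sin.comp continuous_snd))
  have : Sec a b = ⋃ n : ℕ,
      (fun q : ℝ × ℝ => pt2 (q.1 * Real.cos q.2) (q.1 * Real.sin q.2)) ''
        (Set.Icc 0 (n : ℝ) ×ˢ Set.Icc a b) := by
    ext y
    constructor
    · rintro ⟨r, θ, hr, h1, h2, hy0, hy1⟩
      obtain ⟨n, hn⟩ := exists_nat_ge r
      refine mem_iUnion.2 ⟨n, ⟨(r, θ), ⟨⟨hr, hn⟩, h1, h2⟩, ?_⟩⟩
      rw [eq_pt2 y, hy0, hy1]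
    · intro hy
      obtain ⟨n, ⟨⟨r, θ⟩, ⟨⟨hr, _⟩, h1, h2⟩, hq⟩⟩ := mem_iUnion.1 hy
      exact ⟨r, θ, hr, h1, h2, by rw [← hq]; simp, by rw [← hq]; simp⟩
  rw [this]
  refine MeasurableSet.iUnion fun n => ?_
  exact (((isCompact_Icc.prod isCompact_Icc).image hco).isClosed).measurableSet

/-- Reflection across the first coordinate axis. -/
def RefE : E2 ≃ₗᵢ[ℝ] E2 :=
  LinearIsometryEquiv.piLpCongrRight 2
    (fun i : Fin 2 => if i = 1 then LinearIsometryEquiv.neg ℝ else LinearIsometryEquiv.refl ℝ ℝ)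

@[simp] lemma RefE_zero (y : E2) : RefE y 0 = y 0 := by
  simp [RefE, WithLp.equiv_symm_apply]

@[simp] lemma RefE_one (y : E2) : RefE y 1 = -(y 1) := by
  simp [RefE, WithLp.equiv_symm_apply]

/-- Rotation by angle `φ` as a linear map. -/
def rotLM (φ : ℝ) : E2 →ₗ[ℝ] E2 where
  toFun y := pt2 (Real.cos φ * y 0 - Real.sin φ * y 1) (Real.sin φ * y 0 + Real.cos φ * y 1)
  map_add' x y := by
    ext i; fin_cases i <;> simp [PiLp.add_apply] <;> ring
  map_smul' c x := by
    ext i; fin_cases i <;> simp [PiLp.smul_apply, smul_eq_mul] <;> ring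

lemma rotLM_comp (φ : ℝ) (y : E2) : rotLM φ (rotLM (-φ) y) = y := by
  have hpyth := Real.sin_sq_add_cos_sq φ
  ext i
  fin_cases i
  · simp only [rotLM, Real.cos_neg, Real.sin_neg, LinearMap.coe_mk, AddHom.coe_mk,
      pt2_zero, pt2_one]
    show pt2 _ _ 0 = y 0
    rw [pt2_zero]
    linear_combination (y 0) * hpyth
  · simp only [rotLM, Real.cos_neg, Real.sin_neg, LinearMap.coe_mk, AddHom.coe_mk,
      pt2_zero, pt2_one]
    show pt2 _ _ 1 = y 1
    rw [pt2_one]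
    linear_combination (y 1) * hpyth

/-- Rotation by angle `φ` as a linear isometry equivalence of the plane. -/
def RotE (φ : ℝ) : E2 ≃ₗᵢ[ℝ] E2 where
  toLinearEquiv := LinearEquiv.ofLinear (rotLM φ) (rotLM (-φ))
    (LinearMap.ext fun y => by simpa using rotLM_comp φ y)
    (LinearMap.ext fun y => by
      have := rotLM_comp (-φ) y
      rw [neg_neg] at this
      simpa using this)
  norm_map' y := by
    have hpyth := Real.sin_sq_add_cos_sq φ
    simp only [LinearEquiv.ofLinear_apply]
    rw [EuclideanSpace.norm_eq, EuclideanSpace.norm_eq]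
    congr 1
    simp [rotLM, Fin.sum_univ_two, sq_abs]
    ring_nf
    nlinarith [hpyth]

@[simp] lemma RotE_apply (φ : ℝ) (y : E2) :
    RotE φ y = pt2 (Real.cos φ * y 0 - Real.sin φ * y 1)
      (Real.sin φ * y 0 + Real.cos φ * y 1) := rfl

lemma RotE_pt2 (φ r θ : ℝ) :
    RotE φ (pt2 (r * Real.cos θ) (r * Real.sin θ)) =
      pt2 (r * Real.cos (θ + φ)) (r * Real.sin (θ + φ)) := by
  rw [RotE_apply]
  ext i
  fin_cases i <;> simp [Real.cos_add, Real.sin_add] <;> ring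

/-- Rotations map sectors to sectors. -/
lemma RotE_image_Sec (φ a b : ℝ) : RotE φ '' Sec a b = Sec (a + φ) (b + φ) := by
  ext p
  constructor
  · rintro ⟨z, ⟨r, θ, hr, h1, h2, hz0, hz1⟩, rfl⟩
    have hz : z = pt2 (r * Real.cos θ) (r * Real.sin θ) := by
      rw [eq_pt2 z, hz0, hz1]
    rw [hz, RotE_pt2]
    exact ⟨r, θ + φ, hr, by linarith, by linarith, by simp, by simp⟩
  · rintro ⟨r, θ, hr, h1, h2, hp0, hp1⟩
    refine ⟨pt2 (r * Real.cos (θ - φ)) (r * Real.sin (θ - φ)),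
      ⟨r, θ - φ, hr, by linarith, by linarith, by simp, by simp⟩, ?_⟩
    rw [RotE_pt2, sub_add_cancel, eq_pt2 p, hp0, hp1]

/-- Sectors are `2π`-periodic. -/
lemma Sec_shift (a b : ℝ) : Sec a b = Sec (a - 2 * π) (b - 2 * π) := by
  ext p
  constructor
  · rintro ⟨r, θ, hr, h1, h2, hp0, hp1⟩
    exact ⟨r, θ - 2 * π, hr, by linarith, by linarith,
      by rw [hp0, Real.cos_sub_two_pi], by rw [hp1, Real.sin_sub_two_pi]⟩
  · rintro ⟨r, θ, hr, h1, h2, hp0, hp1⟩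
    exact ⟨r, θ + 2 * π, hr, by linarith, by linarith,
      by rw [hp0, Real.cos_add_two_pi], by rw [hp1, Real.sin_add_two_pi]⟩

/-- Any point in the closed upper half plane lies in a sector of opening at least `π`. -/
lemma upper_mem_Sec {β : ℝ} (hβ : π ≤ β) {y : E2} (hy : 0 ≤ y 1) : y ∈ Sec 0 β := by
  have hβ0 : (0:ℝ) ≤ β := le_trans Real.pi_pos.le hβ
  set r : ℝ := Real.sqrt ((y 0) ^ 2 + (y 1) ^ 2) with hrdef
  rcases eq_or_lt_of_le (Real.sqrt_nonneg ((y 0) ^ 2 + (y 1) ^ 2)) with h0 | hrpos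
  · have hsum : (y 0) ^ 2 + (y 1) ^ 2 = 0 := by
      have hsq := Real.sq_sqrt (show (0:ℝ) ≤ (y 0) ^ 2 + (y 1) ^ 2 by positivity)
      rw [← h0] at hsq
      simpa using hsq.symm
    have hy0 : y 0 = 0 := by nlinarith [sq_nonneg (y 0), sq_nonneg (y 1)]
    have hy1 : y 1 = 0 := by nlinarith [sq_nonneg (y 0), sq_nonneg (y 1)]
    exact ⟨0, 0, le_refl 0, le_refl 0, hβ0, by simp [hy0], by simp [hy1]⟩
  · have hr2 : r ^ 2 = (y 0) ^ 2 + (y 1) ^ 2 := Real.sq_sqrt (by positivity)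
    have habs0 : |y 0| ≤ r := by
      rw [← Real.sqrt_sq_eq_abs]
      exact Real.sqrt_le_sqrt (by nlinarith [sq_nonneg (y 1)])
    have hd1 : -1 ≤ y 0 / r := by
      rw [neg_le, ← neg_div, div_le_one hrpos]
      calc -(y 0) ≤ |y 0| := neg_le_abs _
        _ ≤ r := habs0
    have hd2 : y 0 / r ≤ 1 := by
      rw [div_le_one hrpos]
      exact (le_abs_self _).trans habs0
    refine ⟨r, Real.arccos (y 0 / r), hrpos.le, Real.arccos_nonneg _,
      (Real.arccos_le_pi _).trans hβ, ?_, ?_⟩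
    · rw [Real.cos_arccos hd1 hd2]
      field_simp [show r ≠ 0 from hrpos.ne']
    · rw [Real.sin_arccos]
      have hsub : 1 - (y 0 / r) ^ 2 = (y 1 / r) ^ 2 := by
        field_simp [show r ≠ 0 from hrpos.ne']
        nlinarith [hr2]
      rw [hsub, Real.sqrt_sq_eq_abs, abs_div, abs_of_pos hrpos, abs_of_nonneg hy]
      field_simp
      rfl

lemma cover_of_fat {β : ℝ} (hβ : π ≤ β) (y : E2) :
    y ∈ Sec 0 β ∨ RefE y ∈ Sec 0 β := by
  rcases le_total 0 (y 1) with hy | hy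
  · exact Or.inl (upper_mem_Sec hβ hy)
  · refine Or.inr (upper_mem_Sec hβ ?_)
    rw [RefE_one]
    linarith

lemma lower_of_thin {τ : ℝ} (hτ2 : τ < π) {y : E2} (hy : y ∈ Sec (-τ) 0) : y 1 ≤ 0 := by
  obtain ⟨r, θ, hr, h1, h2, _, hy1⟩ := hy
  rw [hy1]
  have : Real.sin θ ≤ 0 :=
    Real.sin_nonpos_of_nonpos_of_neg_pi_le h2 (by linarith)
  exact mul_nonpos_of_nonneg_of_nonpos hr this

lemma far_of_thin {τ : ℝ} (hτ1 : 0 < τ) (hτ2 : τ < π) {y : E2} (hy : y ∈ Sec (-τ) 0) :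
    2 * Real.sin τ ≤ dist (pt2 (-2) 0) y := by
  obtain ⟨r, θ, hr, h1, h2, hy0, hy1⟩ := hy
  have hsint : 0 < Real.sin τ := Real.sin_pos_of_pos_of_lt_pi hτ1 hτ2
  rw [dist2]
  simp only [pt2_zero, pt2_one, hy0, hy1]
  apply Real.le_sqrt_of_sq_le
  have hD : (-2 - r * Real.cos θ) ^ 2 + (0 - r * Real.sin θ) ^ 2
      = r ^ 2 + 4 * r * Real.cos θ + 4 := by
    linear_combination r ^ 2 * Real.sin_sq_add_cos_sq θ
  rw [hD]
  rcases le_or_gt 0 (Real.cos θ) with hc | hc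
  · nlinarith [Real.sin_le_one τ, hsint, sq_nonneg r, mul_nonneg (mul_nonneg
      (by norm_num : (0:ℝ) ≤ 4) hr) hc]
  · have hθhalf : θ < -(π / 2) := by
      by_contra hcon
      push_neg at hcon
      exact absurd (Real.cos_nonneg_of_mem_Icc ⟨hcon, by linarith [Real.pi_pos]⟩)
        (not_le.2 hc)
    have hsin : Real.sin τ ≤ Real.sin (-θ) := by
      rw [← Real.sin_pi_sub τ, ← Real.sin_pi_sub (-θ)]
      rw [sub_neg_eq_add]
      exact Real.sin_le_sin_of_le_of_le_pi_div_two (by linarith) (by linarith) (by linarith)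
    rw [Real.sin_neg] at hsin
    nlinarith [sq_nonneg (r + 2 * Real.cos θ), Real.sin_sq_add_cos_sq θ, hsint]

lemma unit_circle_cases {a b φ : ℝ} {y : E2} (hy : y ∈ Sec a b)
    (hy0 : y 0 = Real.cos φ) (hy1 : y 1 = Real.sin φ) :
    ∃ θ, a ≤ θ ∧ θ ≤ b ∧ Real.cos (θ - φ) = 1 := by
  obtain ⟨r, θ, hr, h1, h2, h0', h1'⟩ := hy
  have hr2 : r ^ 2 = 1 := by
    have : r ^ 2 * ((Real.cos θ) ^ 2 + (Real.sin θ) ^ 2)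
        = (Real.cos φ) ^ 2 + (Real.sin φ) ^ 2 := by
      rw [← hy0, ← hy1, h0', h1']
      ring
    nlinarith [Real.sin_sq_add_cos_sq θ, Real.sin_sq_add_cos_sq φ]
  have hr1 : r = 1 := by nlinarith
  subst hr1
  refine ⟨θ, h1, h2, ?_⟩
  have hcθ : Real.cos θ = Real.cos φ := by
    linear_combination (h0'.symm.trans hy0)
  have hsθ : Real.sin θ = Real.sin φ := by
    linear_combination (h1'.symm.trans hy1)
  rw [Real.cos_sub, hcθ, hsθ]
  linear_combination Real.sin_sq_add_cos_sq φ

lemma dist_unit_pts (φ ψ : ℝ) :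
    dist (pt2 (Real.cos φ) (Real.sin φ)) (pt2 (Real.cos ψ) (Real.sin ψ)) ≤ |φ - ψ| := by
  rw [dist2]
  simp only [pt2_zero, pt2_one]
  have hc : (Real.cos φ - Real.cos ψ) ^ 2 + (Real.sin φ - Real.sin ψ) ^ 2
      = 2 - 2 * Real.cos (φ - ψ) := by
    rw [Real.cos_sub]
    nlinarith [Real.sin_sq_add_cos_sq φ, Real.sin_sq_add_cos_sq ψ]
  rw [hc]
  have h2 : 2 - 2 * Real.cos (φ - ψ) ≤ (φ - ψ) ^ 2 := by
    nlinarith [Real.one_sub_sq_div_two_le_cos (x := φ - ψ)]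
  calc Real.sqrt (2 - 2 * Real.cos (φ - ψ)) ≤ Real.sqrt ((φ - ψ) ^ 2) := Real.sqrt_le_sqrt h2
    _ = |φ - ψ| := Real.sqrt_sq_eq_abs _

lemma int_mul_two_pi_not_mem_Ioo {n : ℤ} {u : ℝ} (hu1 : 0 < u) (hu2 : u < 2 * π)
    (hn : (n : ℝ) * (2 * π) = u) : False := by
  rcases le_or_gt n 0 with hn0 | hn1
  · have hcast : (n : ℝ) ≤ 0 := by exact_mod_cast hn0
    nlinarith [Real.pi_pos]
  · have hcast : (1 : ℝ) ≤ (n : ℝ) := by exact_mod_cast hn1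
    nlinarith [Real.pi_pos]

lemma mem_frontier_left {a b : ℝ} (hab : a ≤ b) (hb : b < a + 2 * π) :
    pt2 (Real.cos a) (Real.sin a) ∈ frontier (Sec a b) := by
  refine ⟨subset_closure ⟨1, a, zero_le_one, le_refl a, hab, by simp, by simp⟩, ?_⟩
  intro hint
  rw [mem_interior_iff_mem_nhds, Metric.mem_nhds_iff] at hint
  obtain ⟨ε, hε, hball⟩ := hint
  set δ := min (ε / 2) ((a + 2 * π - b) / 2) with hδdef
  have hδpos : 0 < δ := lt_min (by linarith) (by linarith)
  have hδε : δ < ε := lt_of_le_of_lt (min_le_left _ _) (by linarith)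
  have hδb : δ < a + 2 * π - b := lt_of_le_of_lt (min_le_right _ _) (by linarith)
  have hz : pt2 (Real.cos (a - δ)) (Real.sin (a - δ)) ∈ Sec a b := by
    apply hball
    rw [Metric.mem_ball]
    calc dist _ _ ≤ |(a - δ) - a| := dist_unit_pts (a - δ) a
      _ = δ := by rw [show (a - δ) - a = -δ by ring, abs_neg, abs_of_pos hδpos]
      _ < ε := hδε
  obtain ⟨θ, h1, h2, hcos1⟩ := unit_circle_cases (φ := a - δ) hz (by simp) (by simp)
  rw [Real.cos_eq_one_iff] at hcos1
  obtain ⟨n, hn⟩ := hcos1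
  exact int_mul_two_pi_not_mem_Ioo (by linarith) (by linarith) hn

lemma mem_frontier_right {a b : ℝ} (hab : a ≤ b) (hb : b < a + 2 * π) :
    pt2 (Real.cos b) (Real.sin b) ∈ frontier (Sec a b) := by
  refine ⟨subset_closure ⟨1, b, zero_le_one, hab, le_refl b, by simp, by simp⟩, ?_⟩
  intro hint
  rw [mem_interior_iff_mem_nhds, Metric.mem_nhds_iff] at hint
  obtain ⟨ε, hε, hball⟩ := hint
  set δ := min (ε / 2) ((a + 2 * π - b) / 2) with hδdef
  have hδpos : 0 < δ := lt_min (by linarith) (by linarith)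
  have hδε : δ < ε := lt_of_le_of_lt (min_le_left _ _) (by linarith)
  have hδb : δ < a + 2 * π - b := lt_of_le_of_lt (min_le_right _ _) (by linarith)
  have hz : pt2 (Real.cos (b + δ)) (Real.sin (b + δ)) ∈ Sec a b := by
    apply hball
    rw [Metric.mem_ball]
    calc dist _ _ ≤ |(b + δ) - b| := dist_unit_pts (b + δ) b
      _ = δ := by rw [show (b + δ) - b = δ by ring, abs_of_pos hδpos]
      _ < ε := hδε
  obtain ⟨θ, h1, h2, hcos1⟩ := unit_circle_cases (φ := b + δ) hz (by simp) (by simp)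
  have hcos1' : Real.cos ((b + δ) - θ) = 1 := by
    rw [← neg_sub, Real.cos_neg]
    exact hcos1
  rw [Real.cos_eq_one_iff] at hcos1'
  obtain ⟨n, hn⟩ := hcos1'
  exact int_mul_two_pi_not_mem_Ioo (by linarith) (by linarith) hn

/-- Transport of the PV fractional curvature along a linear isometry. -/
lemma fracCurvPV_image (T : E2 ≃ₗᵢ[ℝ] E2) {s : ℝ} {E₀ : Set E2} {x : E2} {h : ℝ}
    (hf : fracCurvPV s E₀ x h) : fracCurvPV s (T '' E₀) (T x) h := by
  unfold fracCurvPV at hf ⊢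
  have key : ∀ ε : ℝ,
      (∫ y in {y | ε ≤ dist (T x) y},
        (Set.indicator (T '' E₀)ᶜ (fun _ => (1 : ℝ)) y -
          Set.indicator (T '' E₀) (fun _ => (1 : ℝ)) y) * dist (T x) y ^ (-(2 + s))) =
      ∫ y in {y | ε ≤ dist x y},
        (Set.indicator E₀ᶜ (fun _ => (1 : ℝ)) y -
          Set.indicator E₀ (fun _ => (1 : ℝ)) y) * dist x y ^ (-(2 + s)) := by
    intro ε
    have hset : {y : E2 | ε ≤ dist (T x) y} = T '' {z : E2 | ε ≤ dist x z} := by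
      ext y
      simp only [Set.mem_setOf_eq, Set.mem_image]
      constructor
      · intro hy
        refine ⟨T.symm y, ?_, by simp⟩
        have : dist x (T.symm y) = dist (T x) y := by
          rw [← T.dist_map]
          simp
        exact le_of_le_of_eq hy this.symm
      · rintro ⟨z, hz, rfl⟩
        rwa [T.dist_map]
    rw [hset, (T.measurePreserving).setIntegral_image_emb
      T.toHomeomorph.measurableEmbedding]
    apply setIntegral_congr_fun (by
      exact isClosed_le continuous_const (continuous_const.dist continuous_id) |>.measurableSet)
    intro z _
    have h1 : Set.indicator (T '' E₀) (fun _ => (1 : ℝ)) (T z)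
        = Set.indicator E₀ (fun _ => (1 : ℝ)) z := by
      by_cases hz : z ∈ E₀
      · rw [Set.indicator_of_mem (Set.mem_image_of_mem _ hz), Set.indicator_of_mem hz]
      · rw [Set.indicator_of_notMem, Set.indicator_of_notMem hz]
        intro hc
        obtain ⟨w, hw, hwz⟩ := hc
        exact hz ((T.injective hwz) ▸ hw)
    have h2 : Set.indicator (T '' E₀)ᶜ (fun _ => (1 : ℝ)) (T z)
        = Set.indicator E₀ᶜ (fun _ => (1 : ℝ)) z := by
      by_cases hz : z ∈ E₀
      · rw [Set.indicator_of_notMem, Set.indicator_of_notMem (by simpa using hz)]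
        simp only [Set.mem_compl_iff, not_not]
        exact Set.mem_image_of_mem _ hz
      · rw [Set.indicator_of_mem, Set.indicator_of_mem (by simpa using hz)]
        simp only [Set.mem_compl_iff]
        intro hc
        obtain ⟨w, hw, hwz⟩ := hc
        exact hz ((T.injective hwz) ▸ hw)
    dsimp only
    rw [h1, h2, T.dist_map]
  simpa only [key] using hf

lemma measurableSet_A (x : E2) (ε : ℝ) : MeasurableSet {y : E2 | ε ≤ dist x y} :=
  (isClosed_le continuous_const (continuous_const.dist continuous_id)).measurableSet

/-- Integrability of the truncated kernel. -/
lemma integrableOn_ker (x : E2) {s ε : ℝ} (hs0 : 0 < s) (hε : 0 < ε) :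
    IntegrableOn (fun y => dist x y ^ (-(2 + s))) {y : E2 | ε ≤ dist x y} volume := by
  have hr : (0:ℝ) < 2 + s := by linarith
  have hdim : (Module.finrank ℝ E2 : ℝ) < 2 + s := by
    simp [finrank_euclideanSpace_fin]
    linarith
  have hint : Integrable (fun y : E2 => (1 + ‖y‖) ^ (-(2 + s))) volume :=
    integrable_one_add_norm hdim
  have hint2 : Integrable (fun y : E2 => (1 + ‖y - x‖) ^ (-(2 + s))) volume := by
    have hmp := measurePreserving_sub_right (volume : Measure E2) x
    exact (hmp.integrable_comp_emb (MeasurableEquiv.subRight x).measurableEmbedding).2 hint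
  set C : ℝ := ((1 + ε) / ε) ^ (2 + s) with hC
  have hCpos : 0 < C := Real.rpow_pos_of_pos (div_pos (by linarith) hε) _
  refine Integrable.mono' ((hint2.const_mul C).restrict) ?_ ?_
  · have hcont : ContinuousOn (fun y : E2 => dist x y ^ (-(2 + s)))
        {y : E2 | ε ≤ dist x y} := by
      apply ContinuousOn.rpow_const (continuous_const.dist continuous_id).continuousOn
      intro y hy
      simp only [Set.mem_setOf_eq] at hy
      exact Or.inl (ne_of_gt (lt_of_lt_of_le hε hy))
    exact hcont.aestronglyMeasurable (measurableSet_A x ε)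
  · refine (ae_restrict_iff' (measurableSet_A x ε)).2 (ae_of_all _ ?_)
    intro y hy
    simp only [Set.mem_setOf_eq, id_eq] at hy
    have hd : (0:ℝ) < dist x y := lt_of_lt_of_le hε hy
    have hnorm : ‖dist x y ^ (-(2 + s))‖ = dist x y ^ (-(2 + s))  := by
      rw [Real.norm_eq_abs, abs_of_nonneg (Real.rpow_nonneg dist_nonneg _)]
    rw [hnorm]
    have h1t : 1 + ‖y - x‖ ≤ dist x y * ((1 + ε) / ε) := by
      have hxy : ‖y - x‖ = dist x y := by rw [dist_comm, dist_eq_norm]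
      rw [hxy, mul_div_assoc', le_div_iff₀ hε]
      nlinarith [hy, hε]
    calc dist x y ^ (-(2 + s)) = (dist x y ^ (2 + s))⁻¹ := by
          rw [Real.rpow_neg dist_nonneg]
      _ ≤ ((1 + ‖y - x‖) ^ (2 + s) / C)⁻¹ := by
          apply inv_anti₀
          · positivity
          · rw [div_le_iff₀ hCpos, hC, ← Real.mul_rpow (by positivity) (by positivity)]
            exact Real.rpow_le_rpow (by positivity) h1t hr.le
      _ = C * (1 + ‖y - x‖) ^ (-(2 + s)) := by
          rw [Real.rpow_neg (by positivity)]
          field_simp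

/-- Integrability of the truncated integrand. -/
lemma integrableOn_F {s : ℝ} (hs0 : 0 < s) (E : Set E2) (hE : MeasurableSet E)
    (x : E2) {ε : ℝ} (hε : 0 < ε) :
    IntegrableOn (fun y => (Set.indicator Eᶜ (fun _ => (1 : ℝ)) y -
        Set.indicator E (fun _ => (1 : ℝ)) y) * dist x y ^ (-(2 + s)))
      {y : E2 | ε ≤ dist x y} volume := by
  refine Integrable.mono' (integrableOn_ker x hs0 hε) ?_ ?_
  · refine AEStronglyMeasurable.mul ?_ (integrableOn_ker x hs0 hε).aestronglyMeasurable
    refine Measurable.aestronglyMeasurable ?_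
    exact ((measurable_const.indicator hE.compl).sub (measurable_const.indicator hE))
  · refine ae_of_all _ fun y => ?_
    have hKnn : (0:ℝ) ≤ dist x y ^ (-(2 + s)) := Real.rpow_nonneg dist_nonneg _
    rw [norm_mul, Real.norm_eq_abs (dist x y ^ (-(2 + s))),
      abs_of_nonneg hKnn]
    have : |Set.indicator Eᶜ (fun _ => (1 : ℝ)) y - Set.indicator E (fun _ => (1 : ℝ)) y| ≤ 1 := by
      by_cases hy : y ∈ E <;>
        simp [Set.indicator_of_mem, Set.indicator_of_notMem, hy, abs_le]
    calc |_| * (dist x y ^ (-(2 + s))) ≤ 1 * (dist x y ^ (-(2 + s))) :=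
          mul_le_mul_of_nonneg_right this hKnn
      _ = dist x y ^ (-(2 + s)) := one_mul _

def coordLM : E2 →ₗ[ℝ] ℝ where
  toFun y := y 1
  map_add' x y := by simp [PiLp.add_apply]
  map_smul' c x := by simp [PiLp.smul_apply]

lemma null_axis : volume {y : E2 | y 1 = 0} = 0 := by
  have hset : {y : E2 | y 1 = 0} = (LinearMap.ker coordLM : Set E2) := by
    ext y
    simp [LinearMap.mem_ker, coordLM]
    rfl
  rw [hset]
  apply Measure.addHaar_submodule
  intro htop
  have hmem : pt2 0 1 ∈ LinearMap.ker coordLM := by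
    rw [htop]; trivial
  rw [LinearMap.mem_ker] at hmem
  change pt2 0 1 1 = 0 at hmem
  simp [coordLM] at hmem

lemma refl_preimage_A {x : E2} (hRx : RefE x = x) (ε : ℝ) :
    RefE ⁻¹' {y : E2 | ε ≤ dist x y} = {y : E2 | ε ≤ dist x y} := by
  ext y
  have : dist x (RefE y) = dist x y := by
    conv_lhs => rw [← hRx]
    exact RefE.dist_map x y
  simp [this]

lemma dist_refl {x : E2} (hRx : RefE x = x) (y : E2) : dist x (RefE y) = dist x y := by
  conv_lhs => rw [← hRx]
  exact RefE.dist_map x y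

/-- Splitting the truncated integral using the reflection. -/
lemma refl_split {s : ℝ} (hs0 : 0 < s) (E : Set E2) (hE : MeasurableSet E)
    {x : E2} (hRx : RefE x = x) {ε : ℝ} (hε : 0 < ε) :
    (2:ℝ) * (∫ y in {y : E2 | ε ≤ dist x y},
      (Set.indicator Eᶜ (fun _ => (1 : ℝ)) y - Set.indicator E (fun _ => (1 : ℝ)) y)
        * dist x y ^ (-(2 + s)))
    = ∫ y in {y : E2 | ε ≤ dist x y},
        (((Set.indicator Eᶜ (fun _ => (1 : ℝ)) y - Set.indicator E (fun _ => (1 : ℝ)) y)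
          * dist x y ^ (-(2 + s)))
        + ((Set.indicator Eᶜ (fun _ => (1 : ℝ)) (RefE y) -
            Set.indicator E (fun _ => (1 : ℝ)) (RefE y))
          * dist x y ^ (-(2 + s)))) := by
  set F : E2 → ℝ := fun y => (Set.indicator Eᶜ (fun _ => (1 : ℝ)) y -
      Set.indicator E (fun _ => (1 : ℝ)) y) * dist x y ^ (-(2 + s)) with hF
  have hFint : IntegrableOn F {y : E2 | ε ≤ dist x y} volume := integrableOn_F hs0 E hE x hε
  have hmp : MeasurePreserving RefE (volume.restrict {y : E2 | ε ≤ dist x y})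
      (volume.restrict {y : E2 | ε ≤ dist x y}) := by
    have := (RefE.measurePreserving (F := E2)).restrict_preimage (s := {y : E2 | ε ≤ dist x y})
      (measurableSet_A x ε)
    rwa [refl_preimage_A hRx ε] at this
  have hcompint : IntegrableOn (F ∘ RefE) {y : E2 | ε ≤ dist x y} volume :=
    (hmp.integrable_comp_emb RefE.toHomeomorph.measurableEmbedding).2 hFint
  have hcompeq : (∫ y in {y : E2 | ε ≤ dist x y}, (F ∘ RefE) y)
      = ∫ y in {y : E2 | ε ≤ dist x y}, F y := by
    have := (RefE.measurePreserving (F := E2)).setIntegral_preimage_emb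
      RefE.toHomeomorph.measurableEmbedding F {y : E2 | ε ≤ dist x y}
    rwa [refl_preimage_A hRx ε] at this
  have hFR : ∀ y : E2, F (RefE y) = (Set.indicator Eᶜ (fun _ => (1 : ℝ)) (RefE y) -
      Set.indicator E (fun _ => (1 : ℝ)) (RefE y)) * dist x y ^ (-(2 + s)) := by
    intro y
    rw [hF]
    dsimp only
    rw [dist_refl hRx]
  calc (2:ℝ) * ∫ y in {y : E2 | ε ≤ dist x y}, F y
      = (∫ y in {y : E2 | ε ≤ dist x y}, F y) +
          ∫ y in {y : E2 | ε ≤ dist x y}, (F ∘ RefE) y := by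
        have : (∫ y in {y : E2 | ε ≤ dist x y}, (F ∘ RefE) y)
            = ∫ y in {y : E2 | ε ≤ dist x y}, F y := hcompeq
        rw [this]; ring
    _ = ∫ y in {y : E2 | ε ≤ dist x y}, (F y + (F ∘ RefE) y) :=
        (integral_add hFint hcompint).symm
    _ = _ := by
        apply integral_congr_ae
        refine ae_of_all _ fun y => ?_
        show F y + (F ∘ RefE) y = _
        rw [show (F ∘ RefE) y = F (RefE y) from rfl, hFR y]

lemma integrableOn_F_comp {s : ℝ} (hs0 : 0 < s) (E : Set E2) (hE : MeasurableSet E)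
    {x : E2} (hRx : RefE x = x) {ε : ℝ} (hε : 0 < ε) :
    IntegrableOn (fun y => (Set.indicator Eᶜ (fun _ => (1 : ℝ)) (RefE y) -
        Set.indicator E (fun _ => (1 : ℝ)) (RefE y)) * dist x y ^ (-(2 + s)))
      {y : E2 | ε ≤ dist x y} volume := by
  set F : E2 → ℝ := fun y => (Set.indicator Eᶜ (fun _ => (1 : ℝ)) y -
      Set.indicator E (fun _ => (1 : ℝ)) y) * dist x y ^ (-(2 + s)) with hF
  have hFint : IntegrableOn F {y : E2 | ε ≤ dist x y} volume := integrableOn_F hs0 E hE x hε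
  have hmp : MeasurePreserving RefE (volume.restrict {y : E2 | ε ≤ dist x y})
      (volume.restrict {y : E2 | ε ≤ dist x y}) := by
    have := (RefE.measurePreserving (F := E2)).restrict_preimage (s := {y : E2 | ε ≤ dist x y})
      (measurableSet_A x ε)
    rwa [refl_preimage_A hRx ε] at this
  have hcompint : IntegrableOn (F ∘ RefE) {y : E2 | ε ≤ dist x y} volume :=
    (hmp.integrable_comp_emb RefE.toHomeomorph.measurableEmbedding).2 hFint
  apply hcompint.congr
  refine ae_of_all _ fun y => ?_
  show F (RefE y) = _
  rw [hF]
  dsimp only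
  rw [dist_refl hRx]

/-- The master analytic lemma: a sector of opening at least `π` and an adjacent sector of
opening less than `π` cannot have the same fractional curvature at a common boundary point. -/
lemma master {s β τ h : ℝ} (hs0 : 0 < s) (hβ1 : π ≤ β)
    (hτ1 : 0 < τ) (hτ2 : τ < π)
    (hfat : fracCurvPV s (Sec 0 β) (pt2 1 0) h)
    (hthin : fracCurvPV s (Sec (-τ) 0) (pt2 1 0) h) : False := by
  have hRx : RefE (pt2 1 0) = pt2 1 0 := by ext i; fin_cases i <;> simp
  have hRp : RefE (pt2 (-2) 0) = pt2 (-2) 0 := by ext i; fin_cases i <;> simp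
  have hsint : 0 < Real.sin τ := Real.sin_pos_of_pos_of_lt_pi hτ1 hτ2
  have hsin1 : Real.sin τ ≤ 1 := Real.sin_le_one τ
  have hdxp : dist (pt2 1 0) (pt2 (-2) 0) = 3 := by
    rw [dist2]
    simp only [pt2_zero, pt2_one]
    rw [show ((1:ℝ) - -2) ^ 2 + ((0:ℝ) - 0) ^ 2 = 3 ^ 2 by norm_num]
    exact Real.sqrt_sq (by norm_num)
  -- the fat side forces `h ≤ 0`
  have hneg : ∀ ε : ℝ, 0 < ε →
      (∫ y in {y : E2 | ε ≤ dist (pt2 1 0) y},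
        (Set.indicator (Sec 0 β)ᶜ (fun _ => (1 : ℝ)) y -
          Set.indicator (Sec 0 β) (fun _ => (1 : ℝ)) y)
          * dist (pt2 1 0) y ^ (-(2 + s))) ≤ 0 := by
    intro ε hε
    have hsplit := refl_split hs0 (Sec 0 β) (measurableSet_Sec 0 β) hRx hε
    have hint_le : (∫ y in {y : E2 | ε ≤ dist (pt2 1 0) y},
        (((Set.indicator (Sec 0 β)ᶜ (fun _ => (1 : ℝ)) y -
            Set.indicator (Sec 0 β) (fun _ => (1 : ℝ)) y)
          * dist (pt2 1 0) y ^ (-(2 + s)))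
        + ((Set.indicator (Sec 0 β)ᶜ (fun _ => (1 : ℝ)) (RefE y) -
            Set.indicator (Sec 0 β) (fun _ => (1 : ℝ)) (RefE y))
          * dist (pt2 1 0) y ^ (-(2 + s))))) ≤ 0 := by
      apply integral_nonpos_of_ae
      refine ae_of_all _ fun y => ?_
      simp only [Pi.zero_apply]
      have hK : (0:ℝ) ≤ dist (pt2 1 0) y ^ (-(2 + s)) := Real.rpow_nonneg dist_nonneg _
      rcases cover_of_fat hβ1 y with hy | hy
      · have e1 : Set.indicator (Sec 0 β)ᶜ (fun _ => (1 : ℝ)) y -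
            Set.indicator (Sec 0 β) (fun _ => (1 : ℝ)) y = -1 := by
          simp [Set.indicator_of_mem hy, Set.indicator_of_notMem, hy]
        have e2 : Set.indicator (Sec 0 β)ᶜ (fun _ => (1 : ℝ)) (RefE y) -
            Set.indicator (Sec 0 β) (fun _ => (1 : ℝ)) (RefE y) ≤ 1 := by
          by_cases hz : RefE y ∈ Sec 0 β <;> simp [hz]
        have e2' := mul_le_mul_of_nonneg_right e2 hK
        rw [e1]
        linarith
      · have e1 : Set.indicator (Sec 0 β)ᶜ (fun _ => (1 : ℝ)) (RefE y) -
            Set.indicator (Sec 0 β) (fun _ => (1 : ℝ)) (RefE y) = -1 := by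
          simp [Set.indicator_of_mem hy, Set.indicator_of_notMem, hy]
        have e2 : Set.indicator (Sec 0 β)ᶜ (fun _ => (1 : ℝ)) y -
            Set.indicator (Sec 0 β) (fun _ => (1 : ℝ)) y ≤ 1 := by
          by_cases hz : y ∈ Sec 0 β <;> simp [hz]
        have e2' := mul_le_mul_of_nonneg_right e2 hK
        rw [e1]
        linarith
    linarith [hsplit ▸ hint_le]
  have hh0 : h ≤ 0 := by
    apply le_of_tendsto hfat
    filter_upwards [eventually_mem_nhdsWithin] with ε hε
    exact hneg ε hε
  -- the thin side forces `h > 0`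
  have hGsubA : ∀ ε : ℝ, ε ≤ 1 →
      Metric.ball (pt2 (-2) 0) (Real.sin τ) ⊆ {y : E2 | ε ≤ dist (pt2 1 0) y} := by
    intro ε hε1 y hy
    rw [Metric.mem_ball] at hy
    have htri := dist_triangle (pt2 1 0) y (pt2 (-2) 0)
    rw [hdxp] at htri
    have h1 : dist y (pt2 (-2) 0) < 1 := lt_of_lt_of_le hy hsin1
    simp only [Set.mem_setOf_eq]
    linarith
  have hGav : ∀ y ∈ Metric.ball (pt2 (-2) 0) (Real.sin τ),
      y ∉ Sec (-τ) 0 ∧ RefE y ∉ Sec (-τ) 0 := by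
    intro y hy
    rw [Metric.mem_ball] at hy
    constructor
    · intro hmem
      have hfar := far_of_thin hτ1 hτ2 hmem
      rw [dist_comm] at hfar
      linarith
    · intro hmem
      have hfar := far_of_thin hτ1 hτ2 hmem
      rw [dist_refl hRp, dist_comm] at hfar
      linarith
  have hKlb : ∀ y ∈ Metric.ball (pt2 (-2) 0) (Real.sin τ),
      (4:ℝ) ^ (-(2 + s)) ≤ dist (pt2 1 0) y ^ (-(2 + s)) := by
    intro y hy
    rw [Metric.mem_ball] at hy
    have htri2 := dist_triangle (pt2 1 0) (pt2 (-2) 0) y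
    rw [hdxp, dist_comm (pt2 (-2) 0) y] at htri2
    have hd4 : dist (pt2 1 0) y ≤ 4 := by linarith
    have htri := dist_triangle (pt2 1 0) y (pt2 (-2) 0)
    rw [hdxp] at htri
    have hdpos : (0:ℝ) < dist (pt2 1 0) y := by linarith
    calc (4:ℝ) ^ (-(2 + s)) = ((4:ℝ) ^ (2 + s))⁻¹ := by
          rw [Real.rpow_neg (by norm_num : (0:ℝ) ≤ 4)]
      _ ≤ (dist (pt2 1 0) y ^ (2 + s))⁻¹ :=
          inv_anti₀ (Real.rpow_pos_of_pos hdpos _)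
            (Real.rpow_le_rpow hdpos.le hd4 (by linarith))
      _ = dist (pt2 1 0) y ^ (-(2 + s)) := by rw [Real.rpow_neg dist_nonneg]
  have hvolG : 0 < (volume (Metric.ball (pt2 (-2) 0) (Real.sin τ))).toReal :=
    ENNReal.toReal_pos (ne_of_gt (Metric.measure_ball_pos _ _ hsint)) (ne_of_lt measure_ball_lt_top)
  have haxis : ∀ᵐ y : E2 ∂volume, ¬ (y 1 = 0) := by
    rw [ae_iff]
    simpa using null_axis
  have hlb : ∀ ε : ℝ, 0 < ε → ε ≤ 1 →
      (4:ℝ) ^ (-(2 + s)) * (volume (Metric.ball (pt2 (-2) 0) (Real.sin τ))).toReal ≤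
      ∫ y in {y : E2 | ε ≤ dist (pt2 1 0) y},
        (Set.indicator (Sec (-τ) 0)ᶜ (fun _ => (1 : ℝ)) y -
          Set.indicator (Sec (-τ) 0) (fun _ => (1 : ℝ)) y)
          * dist (pt2 1 0) y ^ (-(2 + s)) := by
    intro ε hε hε1
    have hsplit := refl_split hs0 (Sec (-τ) 0) (measurableSet_Sec _ _) hRx hε
    have hKG : IntegrableOn (fun z : E2 => 2 * (dist (pt2 1 0) z ^ (-(2 + s))))
        (Metric.ball (pt2 (-2) 0) (Real.sin τ)) volume :=
      (((integrableOn_ker (pt2 1 0) hs0 one_pos).mono_set (hGsubA 1 le_rfl))).const_mul 2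
    have hgint : IntegrableOn ((Metric.ball (pt2 (-2) 0) (Real.sin τ)).indicator
        (fun z : E2 => 2 * (dist (pt2 1 0) z ^ (-(2 + s)))))
        {y : E2 | ε ≤ dist (pt2 1 0) y} volume :=
      (hKG.integrable_indicator measurableSet_ball).integrableOn
    have hsumint : IntegrableOn (fun y : E2 =>
        ((Set.indicator (Sec (-τ) 0)ᶜ (fun _ => (1 : ℝ)) y -
            Set.indicator (Sec (-τ) 0) (fun _ => (1 : ℝ)) y)
          * dist (pt2 1 0) y ^ (-(2 + s)))
        + ((Set.indicator (Sec (-τ) 0)ᶜ (fun _ => (1 : ℝ)) (RefE y) -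
            Set.indicator (Sec (-τ) 0) (fun _ => (1 : ℝ)) (RefE y))
          * dist (pt2 1 0) y ^ (-(2 + s))))
        {y : E2 | ε ≤ dist (pt2 1 0) y} volume :=
      (integrableOn_F hs0 (Sec (-τ) 0) (measurableSet_Sec _ _) (pt2 1 0) hε).add
        (integrableOn_F_comp hs0 (Sec (-τ) 0) (measurableSet_Sec _ _) hRx hε)
    have hgle : ∀ᵐ y : E2 ∂volume,
        (Metric.ball (pt2 (-2) 0) (Real.sin τ)).indicator
          (fun z : E2 => 2 * (dist (pt2 1 0) z ^ (-(2 + s)))) y ≤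
        ((Set.indicator (Sec (-τ) 0)ᶜ (fun _ => (1 : ℝ)) y -
            Set.indicator (Sec (-τ) 0) (fun _ => (1 : ℝ)) y)
          * dist (pt2 1 0) y ^ (-(2 + s)))
        + ((Set.indicator (Sec (-τ) 0)ᶜ (fun _ => (1 : ℝ)) (RefE y) -
            Set.indicator (Sec (-τ) 0) (fun _ => (1 : ℝ)) (RefE y))
          * dist (pt2 1 0) y ^ (-(2 + s))) := by
      refine haxis.mono fun y hy1 => ?_
      have hK : (0:ℝ) ≤ dist (pt2 1 0) y ^ (-(2 + s)) := Real.rpow_nonneg dist_nonneg _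
      by_cases hyG : y ∈ Metric.ball (pt2 (-2) 0) (Real.sin τ)
      · obtain ⟨hnot1, hnot2⟩ := hGav y hyG
        have e1 : Set.indicator (Sec (-τ) 0)ᶜ (fun _ => (1 : ℝ)) y -
            Set.indicator (Sec (-τ) 0) (fun _ => (1 : ℝ)) y = 1 := by
          simp [hnot1]
        have e2 : Set.indicator (Sec (-τ) 0)ᶜ (fun _ => (1 : ℝ)) (RefE y) -
            Set.indicator (Sec (-τ) 0) (fun _ => (1 : ℝ)) (RefE y) = 1 := by
          simp [hnot2]
        rw [Set.indicator_of_mem hyG, e1, e2]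
        ring_nf
        exact le_refl _
      · rw [Set.indicator_of_notMem hyG]
        rcases Classical.em (y ∈ Sec (-τ) 0) with hyE | hyE
        · have hRnot : RefE y ∉ Sec (-τ) 0 := by
            intro hc
            have l1 := lower_of_thin hτ2 hyE
            have l2 := lower_of_thin hτ2 hc
            rw [RefE_one] at l2
            exact hy1 (le_antisymm l1 (by linarith))
          have e1 : Set.indicator (Sec (-τ) 0)ᶜ (fun _ => (1 : ℝ)) y -
              Set.indicator (Sec (-τ) 0) (fun _ => (1 : ℝ)) y = -1 := by
            simp [Set.indicator_of_mem hyE, Set.indicator_of_notMem, hyE]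
          have e2 : Set.indicator (Sec (-τ) 0)ᶜ (fun _ => (1 : ℝ)) (RefE y) -
              Set.indicator (Sec (-τ) 0) (fun _ => (1 : ℝ)) (RefE y) = 1 := by
            simp [hRnot]
          rw [e1, e2]
          linarith
        · have e1 : Set.indicator (Sec (-τ) 0)ᶜ (fun _ => (1 : ℝ)) y -
              Set.indicator (Sec (-τ) 0) (fun _ => (1 : ℝ)) y = 1 := by
            simp [hyE]
          have e2 : -1 ≤ Set.indicator (Sec (-τ) 0)ᶜ (fun _ => (1 : ℝ)) (RefE y) -
              Set.indicator (Sec (-τ) 0) (fun _ => (1 : ℝ)) (RefE y) := by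
            by_cases hz : RefE y ∈ Sec (-τ) 0 <;> simp [hz]
          have e2' := mul_le_mul_of_nonneg_right e2 hK
          rw [e1]
          linarith
    have hmono := integral_mono_ae hgint hsumint (ae_restrict_of_ae hgle)
    have hindic : (∫ y in {y : E2 | ε ≤ dist (pt2 1 0) y},
        (Metric.ball (pt2 (-2) 0) (Real.sin τ)).indicator
          (fun z : E2 => 2 * (dist (pt2 1 0) z ^ (-(2 + s)))) y)
        = ∫ y in Metric.ball (pt2 (-2) 0) (Real.sin τ),
            2 * (dist (pt2 1 0) y ^ (-(2 + s))) := by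
      rw [setIntegral_indicator measurableSet_ball,
        Set.inter_eq_self_of_subset_right (hGsubA ε hε1)]
    have hconst : (2 * ((4:ℝ) ^ (-(2 + s)))) *
        (volume (Metric.ball (pt2 (-2) 0) (Real.sin τ))).toReal ≤
        ∫ y in Metric.ball (pt2 (-2) 0) (Real.sin τ),
          2 * (dist (pt2 1 0) y ^ (-(2 + s))) := by
      apply setIntegral_ge_of_const_le_real measurableSet_ball
        (ne_of_lt measure_ball_lt_top) ?_ hKG
      intro y hy
      have := hKlb y hy
      linarith
    linarith [hsplit ▸ (le_trans (hindic ▸ hconst) hmono)]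
  have hch : (4:ℝ) ^ (-(2 + s)) *
      (volume (Metric.ball (pt2 (-2) 0) (Real.sin τ))).toReal ≤ h := by
    apply ge_of_tendsto hthin
    filter_upwards [Ioc_mem_nhdsGT_of_mem (Set.left_mem_Ico.mpr zero_lt_one)] with ε hε
    exact hlb ε hε.1 hε.2
  have hc₀ : 0 < (4:ℝ) ^ (-(2 + s)) *
      (volume (Metric.ball (pt2 (-2) 0) (Real.sin τ))).toReal :=
    mul_pos (Real.rpow_pos_of_pos (by norm_num) _) hvolG
  linarith

end

end AuxCone

open AuxCone

/-- In a stationary 3-cone for the equal-weight fractional perimeter in the plane,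
every opening angle is strictly less than `π`. -/
theorem angles_lt_pi_of_stationary (s : ℝ) (hs : s ∈ Set.Ioo (0 : ℝ) 1)
    (α₁ α₂ α₃ : ℝ) (h₁ : 0 < α₁) (h₂ : 0 < α₂) (h₃ : 0 < α₃)
    (hsum : α₁ + α₂ + α₃ = 2 * π)
    (hst₁₂ : StationaryPair s (Sec 0 α₁) (Sec α₁ (α₁ + α₂)))
    (hst₂₃ : StationaryPair s (Sec α₁ (α₁ + α₂)) (Sec (α₁ + α₂) (2 * π)))
    (hst₃₁ : StationaryPair s (Sec (α₁ + α₂) (2 * π)) (Sec 0 α₁)) :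
    α₁ < π ∧ α₂ < π ∧ α₃ < π := by
  have hπ := Real.pi_pos
  refine ⟨?_, ?_, ?_⟩
  · -- if `π ≤ α₁`, contradict stationarity of the pair `(C₃, C₁)` along the ray `θ = 0`
    by_contra hge
    push_neg at hge
    have mf₁ : pt2 1 0 ∈ frontier (Sec 0 α₁) := by
      have := mem_frontier_left (a := 0) (b := α₁) h₁.le (by linarith)
      simpa using this
    have mf₃ : pt2 1 0 ∈ frontier (Sec (α₁ + α₂) (2 * π)) := by
      have := mem_frontier_right (a := α₁ + α₂) (b := 2 * π) (by linarith) (by linarith)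
      simpa [Real.cos_two_pi, Real.sin_two_pi] using this
    have hne : (pt2 1 0 : EuclideanSpace ℝ (Fin 2)) ≠ 0 := pt2_ne_zero 1 0 (by norm_num)
    obtain ⟨h, hC3, hC1⟩ := hst₃₁ (pt2 1 0) ⟨mf₃, mf₁⟩ hne
    have hshift : Sec (α₁ + α₂) (2 * π) = Sec (-α₃) 0 := by
      rw [Sec_shift]
      rw [show α₁ + α₂ - 2 * π = -α₃ by linarith, show 2 * π - 2 * π = (0:ℝ) by ring]
    rw [hshift] at hC3
    exact master hs.1 hge h₃ (by linarith) hC1 hC3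
  · -- if `π ≤ α₂`, contradict stationarity of the pair `(C₁, C₂)` along the ray `θ = α₁`
    by_contra hge
    push_neg at hge
    have mfA : pt2 (Real.cos α₁) (Real.sin α₁) ∈ frontier (Sec 0 α₁) :=
      mem_frontier_right (a := 0) (b := α₁) h₁.le (by linarith)
    have mfB : pt2 (Real.cos α₁) (Real.sin α₁) ∈ frontier (Sec α₁ (α₁ + α₂)) :=
      mem_frontier_left (a := α₁) (b := α₁ + α₂) (by linarith) (by linarith)
    have hne : (pt2 (Real.cos α₁) (Real.sin α₁) : EuclideanSpace ℝ (Fin 2)) ≠ 0 :=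
      pt2_ne_zero _ _ (Real.cos_sq_add_sin_sq α₁)
    obtain ⟨h, hC1, hC2⟩ := hst₁₂ (pt2 (Real.cos α₁) (Real.sin α₁)) ⟨mfA, mfB⟩ hne
    have t1 := fracCurvPV_image (RotE (-α₁)) hC1
    have t2 := fracCurvPV_image (RotE (-α₁)) hC2
    have hxrot : RotE (-α₁) (pt2 (Real.cos α₁) (Real.sin α₁)) = pt2 1 0 := by
      have hpt := RotE_pt2 (-α₁) 1 α₁
      rw [one_mul, one_mul] at hpt
      rw [hpt]
      norm_num
    rw [RotE_image_Sec, hxrot, show Sec (0 + -α₁) (α₁ + -α₁) = Sec (-α₁) 0 by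
      rw [show (0:ℝ) + -α₁ = -α₁ by ring, show α₁ + -α₁ = (0:ℝ) by ring]] at t1
    rw [RotE_image_Sec, hxrot, show Sec (α₁ + -α₁) (α₁ + α₂ + -α₁) = Sec 0 α₂ by
      rw [show α₁ + -α₁ = (0:ℝ) by ring, show α₁ + α₂ + -α₁ = α₂ by ring]] at t2
    exact master hs.1 hge h₁ (by linarith) t2 t1
  · -- if `π ≤ α₃`, contradict stationarity of the pair `(C₂, C₃)` along the ray `θ = α₁ + α₂`
    by_contra hge
    push_neg at hge
    have mfA : pt2 (Real.cos (α₁ + α₂)) (Real.sin (α₁ + α₂)) ∈ frontier (Sec α₁ (α₁ + α₂)) :=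
      mem_frontier_right (a := α₁) (b := α₁ + α₂) (by linarith) (by linarith)
    have mfB : pt2 (Real.cos (α₁ + α₂)) (Real.sin (α₁ + α₂))
        ∈ frontier (Sec (α₁ + α₂) (2 * π)) :=
      mem_frontier_left (a := α₁ + α₂) (b := 2 * π) (by linarith) (by linarith)
    have hne : (pt2 (Real.cos (α₁ + α₂)) (Real.sin (α₁ + α₂)) : EuclideanSpace ℝ (Fin 2)) ≠ 0 :=
      pt2_ne_zero _ _ (Real.cos_sq_add_sin_sq (α₁ + α₂))
    obtain ⟨h, hC2, hC3⟩ := hst₂₃ (pt2 (Real.cos (α₁ + α₂)) (Real.sin (α₁ + α₂))) ⟨mfA, mfB⟩ hne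
    have t2 := fracCurvPV_image (RotE (-(α₁ + α₂))) hC2
    have t3 := fracCurvPV_image (RotE (-(α₁ + α₂))) hC3
    have hxrot : RotE (-(α₁ + α₂)) (pt2 (Real.cos (α₁ + α₂)) (Real.sin (α₁ + α₂))) = pt2 1 0 := by
      have hpt := RotE_pt2 (-(α₁ + α₂)) 1 (α₁ + α₂)
      rw [one_mul, one_mul, show α₁ + α₂ + -(α₁ + α₂) = (0:ℝ) by ring] at hpt
      rw [hpt]
      norm_num
    rw [RotE_image_Sec, hxrot, show Sec (α₁ + -(α₁ + α₂)) (α₁ + α₂ + -(α₁ + α₂)) = Sec (-α₂) 0 by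
      rw [show α₁ + -(α₁ + α₂) = -α₂ by ring, show α₁ + α₂ + -(α₁ + α₂) = (0:ℝ) by ring]] at t2
    rw [RotE_image_Sec, hxrot, show Sec (α₁ + α₂ + -(α₁ + α₂)) (2 * π + -(α₁ + α₂)) = Sec 0 α₃ by
      rw [show α₁ + α₂ + -(α₁ + α₂) = (0:ℝ) by ring, show 2 * π + -(α₁ + α₂) = α₃ by linarith]] at t3
    exact master hs.1 hge h₂ (by linarith) t3 t2
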